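/- arXiv:1812.11674 — 9 statements merged into one kernel-verified Lean document; each statement's English description precedes it below -/
import Mathlib

section
/- Fix an integer N ≥ 2 and let u be a lattice solution with non-flux boundary conditions. If 1/2 ≤ u(0,j) ≤ 1 for every site 0 ≤ j ≤ N, then 1/2 ≤ u(t,j) ≤ 1 for every time t ∈ ℕ and every site 0 ≤ j ≤ N; moreover min_{0≤j≤N} u(0,j) ≤ u(t,j) ≤ max_{0≤j≤N} u(0,j) for all t and j. -/
lemma lattice_step_in (m M a b c : ℝ) (hm : 1/2 ≤ m) (hM : M ≤ 1)
    (ha1 : m ≤ a) (ha2 : a ≤ M) (hb1 : m ≤ b) (hb2 : b ≤ M)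
    (hc1 : m ≤ c) (hc2 : c ≤ M) :
    m ≤ a + (a * b / 2) * (a + b - 1) * (b - a) + (a * c / 2) * (a + c - 1) * (c - a) ∧
    a + (a * b / 2) * (a + b - 1) * (b - a) + (a * c / 2) * (a + c - 1) * (c - a) ≤ M := by
  have ha0 : (1:ℝ)/2 ≤ a := le_trans hm ha1
  have hb0 : (1:ℝ)/2 ≤ b := le_trans hm hb1
  have hc0 : (1:ℝ)/2 ≤ c := le_trans hm hc1
  have ha1' : a ≤ 1 := le_trans ha2 hM
  have hb1' : b ≤ 1 := le_trans hb2 hM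
  have hc1' : c ≤ 1 := le_trans hc2 hM
  set p := a * b / 2 * (a + b - 1) with hp
  set q := a * c / 2 * (a + c - 1) with hq
  have hp0 : 0 ≤ p := by
    apply mul_nonneg (by positivity) (by linarith)
  have hq0 : 0 ≤ q := by
    apply mul_nonneg (by positivity) (by linarith)
  have hp2 : p ≤ 1/2 := by
    have : a * b ≤ 1 := by nlinarith
    nlinarith
  have hq2 : q ≤ 1/2 := by
    have : a * c ≤ 1 := by nlinarith
    nlinarith
  have hpq : 0 ≤ 1 - p - q := by linarith
  constructor
  · nlinarith [mul_nonneg hp0 (sub_nonneg.2 hb1), mul_nonneg hq0 (sub_nonneg.2 hc1),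
      mul_nonneg hpq (sub_nonneg.2 ha1)]
  · nlinarith [mul_nonneg hp0 (sub_nonneg.2 hb2), mul_nonneg hq0 (sub_nonneg.2 hc2),
      mul_nonneg hpq (sub_nonneg.2 ha2)]

/-- For the lattice cell-movement model with non-flux boundary
conditions, initial data in [1/2, 1] stays in [1/2, 1] for all times, and the
solution stays between the minimum and the maximum of the initial data. -/
theorem lattice_invariance_half_one (N : ℕ) (hN : 2 ≤ N) (u : ℕ → ℕ → ℝ)
    (heq : ∀ t : ℕ, ∀ j : ℕ, 1 ≤ j → j ≤ N - 1 →
      u (t + 1) j = u t j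
        + (u t j * u t (j - 1) / 2) * (u t j + u t (j - 1) - 1) * (u t (j - 1) - u t j)
        + (u t j * u t (j + 1) / 2) * (u t j + u t (j + 1) - 1) * (u t (j + 1) - u t j))
    (hbc0 : ∀ t : ℕ, u t 0 = u t 1)
    (hbcN : ∀ t : ℕ, u t N = u t (N - 1))
    (hinit : ∀ j ≤ N, 1 / 2 ≤ u 0 j ∧ u 0 j ≤ 1) :
    ∀ t : ℕ, ∀ j ≤ N,
      (1 / 2 ≤ u t j ∧ u t j ≤ 1) ∧
      ((Finset.range (N + 1)).inf' (by simp) (u 0) ≤ u t j ∧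
        u t j ≤ (Finset.range (N + 1)).sup' (by simp) (u 0)) := by
  set m := (Finset.range (N + 1)).inf' (by simp) (u 0) with hmdef
  set M := (Finset.range (N + 1)).sup' (by simp) (u 0) with hMdef
  have hm : 1/2 ≤ m := by
    apply Finset.le_inf'
    intro j hj
    exact (hinit j (by simpa using Nat.lt_succ_iff.mp (Finset.mem_range.mp hj))).1
  have hM : M ≤ 1 := by
    apply Finset.sup'_le
    intro j hj
    exact (hinit j (by simpa using Nat.lt_succ_iff.mp (Finset.mem_range.mp hj))).2
  have key : ∀ t : ℕ, ∀ j ≤ N, m ≤ u t j ∧ u t j ≤ M := by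
    intro t
    induction t with
    | zero =>
      intro j hj
      have hjmem : j ∈ Finset.range (N + 1) := Finset.mem_range.mpr (by omega)
      exact ⟨Finset.inf'_le _ hjmem, Finset.le_sup' _ hjmem⟩
    | succ t ih =>
      have hint : ∀ j : ℕ, 1 ≤ j → j ≤ N - 1 → m ≤ u (t + 1) j ∧ u (t + 1) j ≤ M := by
        intro j h1 h2
        rw [heq t j h1 h2]
        have h3 := ih (j - 1) (by omega)
        have h4 := ih j (by omega)
        have h5 := ih (j + 1) (by omega)
        exact lattice_step_in m M _ _ _ hm hM h4.1 h4.2 h3.1 h3.2 h5.1 h5.2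
      intro j hj
      rcases eq_or_ne j 0 with rfl | hj0
      · rw [hbc0]
        exact hint 1 le_rfl (by omega)
      · rcases eq_or_ne j N with hjN | hjN
        · rw [hjN, hbcN]
          exact hint (N - 1) (by omega) le_rfl
        · exact hint j (by omega) (by omega)
  intro t j hj
  obtain ⟨h1, h2⟩ := key t j hj
  exact ⟨⟨le_trans hm h1, le_trans h2 hM⟩, h1, h2⟩
end

section
/- Fix an integer N ≥ 2 and let u be a lattice solution with non-flux boundary conditions with 1/2 ≤ u(0,j) ≤ 1 for all 0 ≤ j ≤ N. If the initial data is monotone nondecreasing in j, i.e. u(0,j) ≤ u(0,j+1) for all 0 ≤ j ≤ N-1, then u(t,·) is monotone nondecreasing in j for every time t ∈ ℕ, i.e. u(t,j) ≤ u(t,j+1) for all t ∈ ℕ and all 0 ≤ j ≤ N-1. -/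
private lemma kfact (x y : ℝ) (hx1 : 1/2 ≤ x) (hx2 : x ≤ 1)
    (hy1 : 1/2 ≤ y) (hy2 : y ≤ 1) :
    0 ≤ (x*y/2)*(x+y-1) ∧ (x*y/2)*(x+y-1) ≤ 1/2 := by
  have h0 : (0:ℝ) ≤ x*y := mul_nonneg (by linarith) (by linarith)
  have h1 : x*y ≤ 1 := mul_le_one₀ hx2 (by linarith) hy2
  have hs : (0:ℝ) ≤ x+y-1 := by linarith
  have hs1 : x+y-1 ≤ 1 := by linarith
  refine ⟨mul_nonneg (by linarith) hs, ?_⟩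
  nlinarith [mul_le_mul (show x*y/2 ≤ 1/2 by linarith) hs1 hs (by norm_num : (0:ℝ) ≤ 1/2)]

private lemma step_bounds (a b c : ℝ)
    (ha1 : 1/2 ≤ a) (ha2 : a ≤ 1) (hb1 : 1/2 ≤ b) (hb2 : b ≤ 1)
    (hc1 : 1/2 ≤ c) (hc2 : c ≤ 1) :
    1/2 ≤ b + (b*a/2)*(b+a-1)*(a-b) + (b*c/2)*(b+c-1)*(c-b) ∧
    b + (b*a/2)*(b+a-1)*(a-b) + (b*c/2)*(b+c-1)*(c-b) ≤ 1 := by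
  obtain ⟨h1, h2⟩ := kfact b a hb1 hb2 ha1 ha2
  obtain ⟨h3, h4⟩ := kfact b c hb1 hb2 hc1 hc2
  set k1 := (b*a/2)*(b+a-1) with hk1def
  set k2 := (b*c/2)*(b+c-1) with hk2def
  constructor
  · nlinarith [mul_nonneg (by linarith : (0:ℝ) ≤ 1 - k1 - k2) (by linarith : (0:ℝ) ≤ b - 1/2),
      mul_nonneg h1 (by linarith : (0:ℝ) ≤ a - 1/2),
      mul_nonneg h3 (by linarith : (0:ℝ) ≤ c - 1/2)]
  · nlinarith [mul_nonneg (by linarith : (0:ℝ) ≤ 1 - k1 - k2) (by linarith : (0:ℝ) ≤ 1 - b),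
      mul_nonneg h1 (by linarith : (0:ℝ) ≤ 1 - a),
      mul_nonneg h3 (by linarith : (0:ℝ) ≤ 1 - c)]

private lemma step_mono (a b c d : ℝ)
    (ha1 : 1/2 ≤ a) (ha2 : a ≤ 1) (hb1 : 1/2 ≤ b) (hb2 : b ≤ 1)
    (hc1 : 1/2 ≤ c) (hc2 : c ≤ 1) (hd1 : 1/2 ≤ d) (hd2 : d ≤ 1)
    (hab : a ≤ b) (hbc : b ≤ c) (hcd : c ≤ d) :
    b + (b*a/2)*(b+a-1)*(a-b) + (b*c/2)*(b+c-1)*(c-b) ≤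
    c + (c*b/2)*(c+b-1)*(b-c) + (c*d/2)*(c+d-1)*(d-c) := by
  have h1 : 0 ≤ (b*a/2)*(b+a-1) := (kfact b a hb1 hb2 ha1 ha2).1
  have h3 : 0 ≤ (b*c/2)*(b+c-1) ∧ (b*c/2)*(b+c-1) ≤ 1/2 := kfact b c hb1 hb2 hc1 hc2
  have h5 : 0 ≤ (c*d/2)*(c+d-1) := (kfact c d hc1 hc2 hd1 hd2).1
  set k1 := (b*a/2)*(b+a-1) with hk1def
  set k2 := (b*c/2)*(b+c-1) with hk2def
  set k3 := (c*d/2)*(c+d-1) with hk3def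
  have hkey : (c*b/2)*(c+b-1) = k2 := by rw [hk2def]; ring
  rw [hkey]
  nlinarith [mul_nonneg (by linarith [h3.2] : (0:ℝ) ≤ 1 - 2*k2) (by linarith : (0:ℝ) ≤ c - b),
    mul_nonneg h5 (by linarith : (0:ℝ) ≤ d - c),
    mul_nonneg h1 (by linarith : (0:ℝ) ≤ b - a)]

/-- For the lattice cell-movement model with non-flux boundary
conditions and initial data in [1/2, 1], monotone (nondecreasing) initial data
stays monotone for all times. -/
theorem lattice_monotonicity_preserved (N : ℕ) (hN : 2 ≤ N) (u : ℕ → ℕ → ℝ)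
    (heq : ∀ t : ℕ, ∀ j : ℕ, 1 ≤ j → j ≤ N - 1 →
      u (t + 1) j = u t j
        + (u t j * u t (j - 1) / 2) * (u t j + u t (j - 1) - 1) * (u t (j - 1) - u t j)
        + (u t j * u t (j + 1) / 2) * (u t j + u t (j + 1) - 1) * (u t (j + 1) - u t j))
    (hbc0 : ∀ t : ℕ, u t 0 = u t 1)
    (hbcN : ∀ t : ℕ, u t N = u t (N - 1))
    (hinit : ∀ j ≤ N, 1 / 2 ≤ u 0 j ∧ u 0 j ≤ 1)
    (hmono : ∀ j ≤ N - 1, u 0 j ≤ u 0 (j + 1)) :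
    ∀ t : ℕ, ∀ j ≤ N - 1, u t j ≤ u t (j + 1) := by
  have key : ∀ t : ℕ, (∀ j ≤ N, 1/2 ≤ u t j ∧ u t j ≤ 1) ∧
      (∀ j ≤ N - 1, u t j ≤ u t (j + 1)) := by
    intro t
    induction t with
    | zero => exact ⟨hinit, hmono⟩
    | succ t ih =>
      obtain ⟨hb, hm⟩ := ih
      -- interior bounds at next step
      have hbint : ∀ j, 1 ≤ j → j ≤ N - 1 → 1/2 ≤ u (t+1) j ∧ u (t+1) j ≤ 1 := by
        intro j h1 h2
        have hjN : j ≤ N := le_trans h2 (Nat.sub_le N 1)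
        have hjm : j - 1 ≤ N := le_trans (Nat.sub_le j 1) hjN
        have hjp : j + 1 ≤ N := by omega
        obtain ⟨ha1, ha2⟩ := hb (j-1) hjm
        obtain ⟨hb1, hb2⟩ := hb j hjN
        obtain ⟨hc1, hc2⟩ := hb (j+1) hjp
        rw [heq t j h1 h2]
        exact step_bounds (u t (j-1)) (u t j) (u t (j+1)) ha1 ha2 hb1 hb2 hc1 hc2
      have hball : ∀ j ≤ N, 1/2 ≤ u (t+1) j ∧ u (t+1) j ≤ 1 := by
        intro j hj
        rcases Nat.eq_zero_or_pos j with h0 | h0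
        · subst h0
          rw [hbc0 (t+1)]
          exact hbint 1 le_rfl (by omega)
        · rcases eq_or_ne j N with hJ | hJ
          · rw [hJ, hbcN (t+1)]
            exact hbint (N-1) (by omega) (by omega)
          · exact hbint j h0 (by omega)
      refine ⟨hball, ?_⟩
      intro j hj
      rcases Nat.eq_zero_or_pos j with h0 | h0
      · subst h0; rw [hbc0 (t+1)]
      · rcases eq_or_ne j (N-1) with hJ | hJ
        · have hJ' : j + 1 = N := by omega
          rw [hJ', hbcN (t+1), hJ]
        · -- 1 ≤ j, j + 1 ≤ N - 1
          have h2 : j + 1 ≤ N - 1 := by omega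
          have e1 := heq t j h0 hj
          have e2 := heq t (j+1) (by omega) h2
          have hjm1 : j - 1 + 1 = j := by omega
          have ha1 := hb (j-1) (by omega)
          have hb1 := hb j (by omega)
          have hc1 := hb (j+1) (by omega)
          have hd1 := hb (j+2) (by omega)
          have hab : u t (j-1) ≤ u t j := by
            have := hm (j-1) (by omega); rwa [hjm1] at this
          have hbc : u t j ≤ u t (j+1) := hm j hj
          have hcd : u t (j+1) ≤ u t (j+2) := hm (j+1) h2
          have hsimp : j + 1 - 1 = j := by omega
          rw [e1, e2, hsimp]
          have := step_mono (u t (j-1)) (u t j) (u t (j+1)) (u t (j+1+1))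
            ha1.1 ha1.2 hb1.1 hb1.2 hc1.1 hc1.2 hd1.1 hd1.2 hab hbc hcd
          linarith
  exact fun t => (key t).2
end

section
/- Fix an integer N ≥ 2 and let u be a lattice solution with non-flux boundary conditions with 1/2 ≤ u(0,j) ≤ 1 for all 0 ≤ j ≤ N. If the initial data is monotone nondecreasing in j (u(0,j) ≤ u(0,j+1) for 0 ≤ j ≤ N-1), then for every site 0 ≤ j ≤ N the sequence t ↦ u(t,j) converges as t → ∞ to the average (1/(N-1))·∑_{j=1}^{N-1} u(0,j) of the initial data over the interior sites. -/
lemma latt_D_bounds (a b : ℝ) (ha : 1/2 ≤ a) (ha1 : a ≤ 1) (hb : 1/2 ≤ b) (hb1 : b ≤ 1) :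
    0 ≤ a * b / 2 * (a + b - 1) ∧ a * b / 2 * (a + b - 1) ≤ 1/2 := by
  have h1 : 0 ≤ a * b := by nlinarith
  have h2 : (0:ℝ) ≤ a + b - 1 := by linarith
  have h3 : a * b ≤ 1 := by nlinarith
  have h4 : a + b - 1 ≤ 1 := by linarith
  constructor
  · exact mul_nonneg (by linarith) h2
  · nlinarith [mul_nonneg (sub_nonneg.2 h3) h2]

lemma latt_step_mem (a b c : ℝ) (ha : 1/2 ≤ a) (hc1 : c ≤ 1)
    (hab : a ≤ b) (hbc : b ≤ c)
    (ha1 : a ≤ 1) (hb : 1/2 ≤ b) (hb1 : b ≤ 1) (hc : 1/2 ≤ c) :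
    1/2 ≤ b + (b*a/2)*(b+a-1)*(a-b) + (b*c/2)*(b+c-1)*(c-b) ∧
    b + (b*a/2)*(b+a-1)*(a-b) + (b*c/2)*(b+c-1)*(c-b) ≤ 1 := by
  obtain ⟨hL0, hL1⟩ := latt_D_bounds b a hb hb1 ha ha1
  obtain ⟨hR0, hR1⟩ := latt_D_bounds b c hb hb1 hc hc1
  constructor
  · nlinarith [mul_nonneg hR0 (sub_nonneg.2 hbc), mul_nonneg (sub_nonneg.2 hL1) (sub_nonneg.2 hab)]
  · nlinarith [mul_nonneg hL0 (sub_nonneg.2 hab), mul_nonneg (sub_nonneg.2 hR1) (sub_nonneg.2 hbc)]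

lemma latt_step_mono (a b c d : ℝ)
    (ha : 1/2 ≤ a) (hd1 : d ≤ 1) (hab : a ≤ b) (hbc : b ≤ c) (hcd : c ≤ d)
    (ha1 : a ≤ 1) (hb : 1/2 ≤ b) (hb1 : b ≤ 1) (hc : 1/2 ≤ c) (hc1 : c ≤ 1) (hd : 1/2 ≤ d) :
    b + (b*a/2)*(b+a-1)*(a-b) + (b*c/2)*(b+c-1)*(c-b)
      ≤ c + (c*b/2)*(c+b-1)*(b-c) + (c*d/2)*(c+d-1)*(d-c) := by
  obtain ⟨hL0, _⟩ := latt_D_bounds b a hb hb1 ha ha1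
  obtain ⟨hM0, hM1⟩ := latt_D_bounds b c hb hb1 hc hc1
  obtain ⟨hD0, _⟩ := latt_D_bounds c d hc hc1 hd hd1
  nlinarith [mul_nonneg hL0 (sub_nonneg.2 hab), mul_nonneg hD0 (sub_nonneg.2 hcd),
    mul_nonneg (sub_nonneg.2 hM1) (sub_nonneg.2 hbc),
    mul_nonneg (mul_nonneg hM0 (sub_nonneg.2 hbc)) (sub_nonneg.2 hbc)]

lemma latt_limit_eq (a b : ℝ) (ha : 1/2 ≤ a) (hab : a ≤ b) (hb1 : b ≤ 1)
    (h : (a * b / 2) * (a + b - 1) * (b - a) = 0) : b = a := by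
  have hpos : 0 < a * b / 2 := by nlinarith
  have h' : a * b / 2 * ((a + b - 1) * (b - a)) = 0 := by
    linarith [h, mul_assoc (a*b/2) (a+b-1) (b-a)]
  have hX : (a + b - 1) * (b - a) = 0 := by
    rcases mul_eq_zero.mp h' with h0 | h0
    · exact absurd h0 (ne_of_gt hpos)
    · exact h0
  nlinarith [hX, sq_nonneg (b - a), mul_nonneg (by linarith : (0:ℝ) ≤ 2*a - 1) (sub_nonneg.2 hab)]

/-- flux from site k to k+1 -/
noncomputable def lattF (u : ℕ → ℕ → ℝ) (t k : ℕ) : ℝ :=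
  (u t k * u t (k+1) / 2) * (u t k + u t (k+1) - 1) * (u t (k+1) - u t k)

/-- partial sum over sites 1..k -/
noncomputable def lattP (u : ℕ → ℕ → ℝ) (t k : ℕ) : ℝ :=
  ∑ i ∈ Finset.range k, u t (i+1)

/-- For the lattice cell-movement model with non-flux boundary
conditions, initial data in [1/2, 1] that is monotone nondecreasing in j,
the solution at every site converges, as t → ∞, to the average of the initial
data over the interior sites 1, …, N-1. -/
theorem lattice_monotone_convergence_to_average (N : ℕ) (hN : 2 ≤ N) (u : ℕ → ℕ → ℝ)
    (heq : ∀ t : ℕ, ∀ j : ℕ, 1 ≤ j → j ≤ N - 1 →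
      u (t + 1) j = u t j
        + (u t j * u t (j - 1) / 2) * (u t j + u t (j - 1) - 1) * (u t (j - 1) - u t j)
        + (u t j * u t (j + 1) / 2) * (u t j + u t (j + 1) - 1) * (u t (j + 1) - u t j))
    (hbc0 : ∀ t : ℕ, u t 0 = u t 1)
    (hbcN : ∀ t : ℕ, u t N = u t (N - 1))
    (hinit : ∀ j ≤ N, 1 / 2 ≤ u 0 j ∧ u 0 j ≤ 1)
    (hmono : ∀ j ≤ N - 1, u 0 j ≤ u 0 (j + 1)) :
    ∀ j ≤ N, Filter.Tendsto (fun t => u t j) Filter.atTop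
      (nhds ((1 / ((N : ℝ) - 1)) * ∑ k ∈ Finset.Icc 1 (N - 1), u 0 k)) := by
  -- Step 1: invariants
  have inv : ∀ t, (∀ j ≤ N, 1/2 ≤ u t j ∧ u t j ≤ 1) ∧
      (∀ j, j + 1 ≤ N → u t j ≤ u t (j+1)) := by
    intro t
    induction t with
    | zero => exact ⟨hinit, fun j hj => hmono j (by omega)⟩
    | succ t ih =>
      obtain ⟨hbd, hm⟩ := ih
      have hbint : ∀ j, 1 ≤ j → j + 1 ≤ N → 1/2 ≤ u (t+1) j ∧ u (t+1) j ≤ 1 := by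
        intro j hj1 hj2
        have hjm : j - 1 + 1 = j := by omega
        have hab : u t (j-1) ≤ u t j := by
          have := hm (j-1) (by omega); rwa [hjm] at this
        have hbc' : u t j ≤ u t (j+1) := hm j (by omega)
        obtain ⟨ha, ha1⟩ := hbd (j-1) (by omega)
        obtain ⟨hb, hb1⟩ := hbd j (by omega)
        obtain ⟨hc, hc1⟩ := hbd (j+1) (by omega)
        rw [heq t j hj1 (by omega)]
        exact latt_step_mem _ _ _ ha hc1 hab hbc' ha1 hb hb1 hc
      have hbd' : ∀ j ≤ N, 1/2 ≤ u (t+1) j ∧ u (t+1) j ≤ 1 := by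
        intro j hj
        rcases Nat.eq_zero_or_pos j with h0 | h1
        · subst h0; rw [hbc0]; exact hbint 1 le_rfl (by omega)
        · rcases eq_or_lt_of_le hj with hNe | hlt
          · rw [hNe, hbcN]
            exact hbint (N-1) (by omega) (by omega)
          · exact hbint j h1 (by omega)
      refine ⟨hbd', fun j hj => ?_⟩
      rcases Nat.eq_zero_or_pos j with h0 | h1
      · subst h0; rw [hbc0]
      · rcases Nat.lt_or_ge (j+1) N with hlt | hge
        · have hjm : j - 1 + 1 = j := by omega
          have hab : u t (j-1) ≤ u t j := by
            have := hm (j-1) (by omega); rwa [hjm] at this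
          have hbc' : u t j ≤ u t (j+1) := hm j (by omega)
          have hcd : u t (j+1) ≤ u t (j+2) := hm (j+1) (by omega)
          obtain ⟨ha, ha1⟩ := hbd (j-1) (by omega)
          obtain ⟨hb, hb1⟩ := hbd j (by omega)
          obtain ⟨hc, hc1⟩ := hbd (j+1) (by omega)
          obtain ⟨hd, hd1⟩ := hbd (j+2) (by omega)
          rw [heq t j h1 (by omega), heq t (j+1) (by omega) (by omega)]
          have e1 : j + 1 - 1 = j := by omega
          have e2 : j + 1 + 1 = j + 2 := by omega
          rw [e1, e2]
          exact latt_step_mono _ _ _ _ ha hd1 hab hbc' hcd ha1 hb hb1 hc hc1 hd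
        · have hNj : j + 1 = N := by omega
          rw [hNj, hbcN]
          have h' : N - 1 = j := by omega
          rw [h']
  -- Step 2: partial sum recursion
  have hPsucc : ∀ t, ∀ k ≤ N - 1, lattP u (t+1) k = lattP u t k + lattF u t k := by
    intro t k hk
    have hstep : ∀ i ∈ Finset.range k,
        u (t+1) (i+1) = u t (i+1) + (lattF u t (i+1) - lattF u t i) := by
      intro i hi
      have hik := Finset.mem_range.mp hi
      have h := heq t (i+1) (by omega) (by omega)
      have e : i + 1 - 1 = i := by omega
      rw [e] at h
      rw [h]; unfold lattF; ring
    have hF0 : lattF u t 0 = 0 := by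
      unfold lattF; rw [hbc0 t]; ring
    calc lattP u (t+1) k
        = ∑ i ∈ Finset.range k, (u t (i+1) + (lattF u t (i+1) - lattF u t i)) :=
          Finset.sum_congr rfl hstep
      _ = lattP u t k + ∑ i ∈ Finset.range k, (lattF u t (i+1) - lattF u t i) := by
          rw [Finset.sum_add_distrib]; rfl
      _ = lattP u t k + (lattF u t k - lattF u t 0) := by rw [Finset.sum_range_sub]
      _ = lattP u t k + lattF u t k := by rw [hF0]; ring
  -- flux nonneg
  have hFnn : ∀ t k, k + 1 ≤ N → 0 ≤ lattF u t k := by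
    intro t k hk
    obtain ⟨hb, hb1⟩ := (inv t).1 k (by omega)
    obtain ⟨hc, hc1⟩ := (inv t).1 (k+1) hk
    have hbc' : u t k ≤ u t (k+1) := (inv t).2 k hk
    exact mul_nonneg (latt_D_bounds _ _ hb hb1 hc hc1).1 (sub_nonneg.2 hbc')
  -- monotone and bounded partial sums
  have hPmono : ∀ k ≤ N - 1, Monotone (fun t => lattP u t k) := by
    intro k hk
    apply monotone_nat_of_le_succ
    intro t
    rw [hPsucc t k hk]
    linarith [hFnn t k (by omega)]
  have hPbdd : ∀ k ≤ N - 1, ∀ t, lattP u t k ≤ (k : ℝ) := by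
    intro k hk t
    calc lattP u t k ≤ ∑ i ∈ Finset.range k, (1:ℝ) := by
          apply Finset.sum_le_sum
          intro i hi
          have hik := Finset.mem_range.mp hi
          exact ((inv t).1 (i+1) (by omega)).2
      _ = (k:ℝ) := by simp
  -- the limits
  set l : ℕ → ℝ := fun k => ⨆ t, lattP u t k with hldef
  have hl : ∀ k ≤ N - 1, Filter.Tendsto (fun t => lattP u t k) Filter.atTop (nhds (l k)) := by
    intro k hk
    exact tendsto_atTop_ciSup (hPmono k hk)
      ⟨(k:ℝ), by rintro x ⟨t, rfl⟩; exact hPbdd k hk t⟩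
  have hl0 : l 0 = 0 := by
    have h1 : Filter.Tendsto (fun t => lattP u t 0) Filter.atTop (nhds 0) := by
      have : (fun t => lattP u t 0) = fun _ => (0:ℝ) := by
        funext t; unfold lattP; simp
      rw [this]; exact tendsto_const_nhds
    exact tendsto_nhds_unique (hl 0 (by omega)) h1
  -- flux tends to zero
  have hFlim : ∀ k ≤ N - 1, Filter.Tendsto (fun t => lattF u t k) Filter.atTop (nhds 0) := by
    intro k hk
    have h1 : Filter.Tendsto (fun t => lattP u (t+1) k) Filter.atTop (nhds (l k)) :=
      (hl k hk).comp (Filter.tendsto_add_atTop_nat 1)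
    have h2 : (fun t => lattF u t k) = fun t => lattP u (t+1) k - lattP u t k := by
      funext t; rw [hPsucc t k hk]; ring
    rw [h2]
    have := h1.sub (hl k hk)
    simpa using this
  -- sites converge
  have husite : ∀ j, 1 ≤ j → j ≤ N - 1 →
      Filter.Tendsto (fun t => u t j) Filter.atTop (nhds (l j - l (j-1))) := by
    intro j h1 h2
    have e : ∀ t, u t j = lattP u t j - lattP u t (j-1) := by
      intro t
      have ej : j - 1 + 1 = j := by omega
      have := Finset.sum_range_succ (fun i => u t (i+1)) (j-1)
      rw [ej] at this
      unfold lattP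
      rw [this]; ring
    have h3 := (hl j h2).sub (hl (j-1) (by omega))
    apply h3.congr
    intro t; exact (e t).symm
  -- limit bounds and equality of consecutive limits
  have hLbd : ∀ j, 1 ≤ j → j ≤ N - 1 →
      1/2 ≤ l j - l (j-1) ∧ l j - l (j-1) ≤ 1 := by
    intro j h1 h2
    constructor
    · exact ge_of_tendsto' (husite j h1 h2) (fun t => ((inv t).1 j (by omega)).1)
    · exact le_of_tendsto' (husite j h1 h2) (fun t => ((inv t).1 j (by omega)).2)
  -- consecutive limits are equal
  have hLcons : ∀ j, 1 ≤ j → j + 1 ≤ N - 1 → l (j+1) - l j = l j - l (j-1) := by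
    intro j h1 h2
    have ej : j + 1 - 1 = j := by omega
    have hu1 := husite j h1 (by omega)
    have hu2 := husite (j+1) (by omega) h2
    rw [ej] at hu2
    have hord : l j - l (j-1) ≤ l (j+1) - l j :=
      le_of_tendsto_of_tendsto' hu1 hu2 (fun t => (inv t).2 j (by omega))
    have hA := hLbd j h1 (by omega)
    have hB := hLbd (j+1) (by omega) h2
    rw [ej] at hB
    have hflx : Filter.Tendsto (fun t => lattF u t j) Filter.atTop
        (nhds (((l j - l (j-1)) * (l (j+1) - l j) / 2)
          * ((l j - l (j-1)) + (l (j+1) - l j) - 1) * ((l (j+1) - l j) - (l j - l (j-1))))) := by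
      have hrfl : (fun t => lattF u t j) = fun t =>
          (u t j * u t (j+1) / 2) * (u t j + u t (j+1) - 1) * (u t (j+1) - u t j) := rfl
      rw [hrfl]
      exact (((hu1.mul hu2).div_const 2).mul
        ((hu1.add hu2).sub tendsto_const_nhds)).mul (hu2.sub hu1)
    have hz := tendsto_nhds_unique hflx (hFlim j (by omega))
    have := latt_limit_eq _ _ hA.1 hord hB.2 hz
    linarith
  -- all interior limits equal l 1 - l 0
  have hLall : ∀ j, 1 ≤ j → j ≤ N - 1 → l j - l (j-1) = l 1 - l 0 := by
    intro j
    induction j with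
    | zero => intro h1 _; exact absurd h1 (by omega)
    | succ j ih =>
      intro h1 h2
      rcases Nat.eq_zero_or_pos j with h0 | hj
      · subst h0; norm_num
      · have hc := hLcons j hj h2
        have ej : j + 1 - 1 = j := by omega
        rw [ej, hc]
        exact ih hj (by omega)
  -- conservation
  have hFN : ∀ t, lattF u t (N-1) = 0 := by
    intro t
    unfold lattF
    have e : N - 1 + 1 = N := by omega
    rw [e, hbcN t]; ring
  have hPconst : ∀ t, lattP u t (N-1) = lattP u 0 (N-1) := by
    intro t; induction t with
    | zero => rfl
    | succ t ih => rw [hPsucc t (N-1) le_rfl, hFN, add_zero, ih]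
  have hlN : l (N-1) = lattP u 0 (N-1) := by
    have hc : Filter.Tendsto (fun t => lattP u t (N-1)) Filter.atTop
        (nhds (lattP u 0 (N-1))) := by
      have hfe : (fun t => lattP u t (N-1)) = fun _ => lattP u 0 (N-1) := funext hPconst
      rw [hfe]; exact tendsto_const_nhds
    exact tendsto_nhds_unique (hl (N-1) le_rfl) hc
  -- telescoping sum of limits
  have hsum : ∑ i ∈ Finset.range (N-1), (l (i+1) - l i) = l (N-1) - l 0 :=
    Finset.sum_range_sub l (N-1)
  have hconst : ∀ i ∈ Finset.range (N-1), l (i+1) - l i = l 1 - l 0 := by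
    intro i hi
    have hik := Finset.mem_range.mp hi
    have := hLall (i+1) (by omega) (by omega)
    simpa using this
  have hNL : ((N-1 : ℕ) : ℝ) * (l 1 - l 0) = lattP u 0 (N-1) := by
    have he : ∑ i ∈ Finset.range (N-1), (l (i+1) - l i) = ((N-1:ℕ):ℝ) * (l 1 - l 0) := by
      rw [Finset.sum_congr rfl hconst, Finset.sum_const, Finset.card_range, nsmul_eq_mul]
    rw [he] at hsum
    rw [hsum, hlN, hl0]; ring
  -- identify the average
  have hIcc : ∑ k ∈ Finset.Icc 1 (N-1), u 0 k = lattP u 0 (N-1) := by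
    unfold lattP
    have hIco : Finset.Icc 1 (N-1) = Finset.Ico 1 N := by
      rw [← Finset.Ico_add_one_right_eq_Icc]
      congr 1
      omega
    rw [hIco, Finset.sum_Ico_eq_sum_range]
    exact Finset.sum_congr rfl (fun i _ => by rw [add_comm])
  have hcast : ((N-1:ℕ):ℝ) = (N:ℝ) - 1 := by
    have h1 : (1:ℕ) ≤ N := by omega
    push_cast [h1]
    ring
  have hne : (N:ℝ) - 1 ≠ 0 := by
    have h2' : (2:ℝ) ≤ (N:ℝ) := by exact_mod_cast hN
    linarith
  have hL1 : (1/((N:ℝ)-1)) * ∑ k ∈ Finset.Icc 1 (N-1), u 0 k = l 1 - l 0 := by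
    rw [hIcc, ← hNL, hcast]
    field_simp
  -- conclusion
  intro j hj
  rw [hL1]
  rcases Nat.eq_zero_or_pos j with h0 | h1
  · subst h0
    have hfe : (fun t => u t 0) = fun t => u t 1 := funext hbc0
    rw [hfe]
    have h := husite 1 le_rfl (by omega)
    rwa [hLall 1 le_rfl (by omega)] at h
  · rcases eq_or_lt_of_le hj with hNe | hlt
    · rw [hNe]
      have hfe : (fun t => u t N) = fun t => u t (N-1) := funext hbcN
      rw [hfe]
      have h := husite (N-1) (by omega) le_rfl
      rwa [hLall (N-1) (by omega) le_rfl] at h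
    · have h := husite j h1 (by omega)
      rwa [hLall j h1 (by omega)] at h
end

section
/- Fix an integer N ≥ 2 and let u be a lattice solution with non-flux boundary conditions. Then the total interior density is conserved: for every time t ∈ ℕ, ∑_{j=1}^{N-1} u(t+1,j) = ∑_{j=1}^{N-1} u(t,j). -/
lemma telescope_Icc (F : ℕ → ℝ) : ∀ m : ℕ,
    ∑ j ∈ Finset.Icc 1 m, (F j - F (j - 1)) = F m - F 0 := by
  intro m
  induction m with
  | zero => simp
  | succ n ih =>
      rw [Finset.sum_Icc_succ_top (by omega : 1 ≤ n + 1), ih]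
      simp

/-- For the lattice cell-movement model with non-flux boundary
conditions, the total interior density is conserved in time. -/
theorem lattice_mass_conservation (N : ℕ) (hN : 2 ≤ N) (u : ℕ → ℕ → ℝ)
    (heq : ∀ t : ℕ, ∀ j : ℕ, 1 ≤ j → j ≤ N - 1 →
      u (t + 1) j = u t j
        + (u t j * u t (j - 1) / 2) * (u t j + u t (j - 1) - 1) * (u t (j - 1) - u t j)
        + (u t j * u t (j + 1) / 2) * (u t j + u t (j + 1) - 1) * (u t (j + 1) - u t j))
    (hbc0 : ∀ t : ℕ, u t 0 = u t 1)
    (hbcN : ∀ t : ℕ, u t N = u t (N - 1)) :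
    ∀ t : ℕ, ∑ j ∈ Finset.Icc 1 (N - 1), u (t + 1) j
      = ∑ j ∈ Finset.Icc 1 (N - 1), u t j := by
  intro t
  set F : ℕ → ℝ := fun j =>
    (u t j * u t (j + 1) / 2) * (u t j + u t (j + 1) - 1) * (u t (j + 1) - u t j) with hF
  have hstep : ∀ j ∈ Finset.Icc 1 (N - 1),
      u (t + 1) j = u t j + (F j - F (j - 1)) := by
    intro j hj
    rw [Finset.mem_Icc] at hj
    have h1 := heq t j hj.1 hj.2
    have hj1 : j - 1 + 1 = j := by omega
    simp only [hF, hj1] at *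
    rw [h1]; ring
  rw [Finset.sum_congr rfl hstep, Finset.sum_add_distrib, telescope_Icc]
  have hF0 : F 0 = 0 := by simp [hF, hbc0 t]
  have hFN : F (N - 1) = 0 := by
    have : N - 1 + 1 = N := by omega
    simp [hF, this, hbcN t]
  rw [hF0, hFN]; ring
end

section
/- Fix an integer N ≥ 2 and let u be a lattice solution with non-flux boundary conditions. If 0 ≤ u(0,j) ≤ 1 for every site 0 ≤ j ≤ N, then 0 ≤ u(t,j) ≤ 1 for every time t ∈ ℕ and every site 0 ≤ j ≤ N. -/
lemma lat_aux1 (x v : ℝ) (hx0 : 0 ≤ x) (hx1 : x ≤ 1) (hv0 : 0 ≤ v) (hv1 : v ≤ 1) :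
    v * (x + v - 1) * (x - v) ≤ 1 := by
  nlinarith [mul_nonneg hx0 hv0, mul_nonneg (sub_nonneg.2 hx1) (sub_nonneg.2 hv1),
    mul_nonneg (sub_nonneg.2 hx1) hv0, mul_nonneg hx0 (sub_nonneg.2 hv1),
    mul_nonneg (mul_nonneg hx0 hv0) (sub_nonneg.2 hv1),
    mul_nonneg (mul_nonneg (sub_nonneg.2 hx1) hv0) (sub_nonneg.2 hv1),
    sq_nonneg (x - v), sq_nonneg (x + v - 1)]

lemma lat_aux2 (x v : ℝ) (hx0 : 0 ≤ x) (hx1 : x ≤ 1) (hv0 : 0 ≤ v) (hv1 : v ≤ 1) :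
    v * (x + v - 1) * (v - x) ≤ 1 - x := by
  nlinarith [mul_nonneg hx0 hv0, mul_nonneg (sub_nonneg.2 hx1) (sub_nonneg.2 hv1),
    mul_nonneg (sub_nonneg.2 hx1) hv0, mul_nonneg hx0 (sub_nonneg.2 hv1),
    mul_nonneg (mul_nonneg hx0 hv0) (sub_nonneg.2 hv1),
    mul_nonneg (mul_nonneg (sub_nonneg.2 hx1) hv0) (sub_nonneg.2 hv1),
    sq_nonneg (x - v), sq_nonneg (x + v - 1)]

lemma lat_half_lo (x v : ℝ) (hx0 : 0 ≤ x) (hx1 : x ≤ 1) (hv0 : 0 ≤ v) (hv1 : v ≤ 1) :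
    -x / 2 ≤ (x * v / 2) * (x + v - 1) * (v - x) := by
  have h := lat_aux1 x v hx0 hx1 hv0 hv1
  nlinarith [mul_nonneg hx0 (sub_nonneg.2 h)]

lemma lat_half_hi (x v : ℝ) (hx0 : 0 ≤ x) (hx1 : x ≤ 1) (hv0 : 0 ≤ v) (hv1 : v ≤ 1) :
    (x * v / 2) * (x + v - 1) * (v - x) ≤ (1 - x) / 2 := by
  have h := lat_aux2 x v hx0 hx1 hv0 hv1
  nlinarith [mul_nonneg hx0 (sub_nonneg.2 h), mul_nonneg hx0 (sub_nonneg.2 hx1)]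

lemma lat_step (x a b : ℝ) (hx0 : 0 ≤ x) (hx1 : x ≤ 1) (ha0 : 0 ≤ a) (ha1 : a ≤ 1)
    (hb0 : 0 ≤ b) (hb1 : b ≤ 1) :
    0 ≤ x + (x * a / 2) * (x + a - 1) * (a - x) + (x * b / 2) * (x + b - 1) * (b - x) ∧
      x + (x * a / 2) * (x + a - 1) * (a - x) + (x * b / 2) * (x + b - 1) * (b - x) ≤ 1 := by
  have h1 := lat_half_lo x a hx0 hx1 ha0 ha1
  have h2 := lat_half_lo x b hx0 hx1 hb0 hb1
  have h3 := lat_half_hi x a hx0 hx1 ha0 ha1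
  have h4 := lat_half_hi x b hx0 hx1 hb0 hb1
  constructor <;> linarith

/-- For the lattice cell-movement model with non-flux boundary
conditions, initial data in [0, 1] stays in [0, 1] for all times. -/
theorem lattice_invariance_zero_one (N : ℕ) (hN : 2 ≤ N) (u : ℕ → ℕ → ℝ)
    (heq : ∀ t : ℕ, ∀ j : ℕ, 1 ≤ j → j ≤ N - 1 →
      u (t + 1) j = u t j
        + (u t j * u t (j - 1) / 2) * (u t j + u t (j - 1) - 1) * (u t (j - 1) - u t j)
        + (u t j * u t (j + 1) / 2) * (u t j + u t (j + 1) - 1) * (u t (j + 1) - u t j))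
    (hbc0 : ∀ t : ℕ, u t 0 = u t 1)
    (hbcN : ∀ t : ℕ, u t N = u t (N - 1))
    (hinit : ∀ j ≤ N, 0 ≤ u 0 j ∧ u 0 j ≤ 1) :
    ∀ t : ℕ, ∀ j ≤ N, 0 ≤ u t j ∧ u t j ≤ 1 := by
  intro t
  induction t with
  | zero => exact hinit
  | succ t ih =>
    have hint : ∀ j : ℕ, 1 ≤ j → j ≤ N - 1 → 0 ≤ u (t + 1) j ∧ u (t + 1) j ≤ 1 := by
      intro j hj1 hjN
      have hjN' : j ≤ N := le_trans hjN (Nat.sub_le N 1)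
      have hjm : j - 1 ≤ N := le_trans (Nat.sub_le j 1) hjN'
      have hjp : j + 1 ≤ N := by omega
      obtain ⟨hx0, hx1⟩ := ih j hjN'
      obtain ⟨ha0, ha1⟩ := ih (j - 1) hjm
      obtain ⟨hb0, hb1⟩ := ih (j + 1) hjp
      rw [heq t j hj1 hjN]
      exact lat_step (u t j) (u t (j - 1)) (u t (j + 1)) hx0 hx1 ha0 ha1 hb0 hb1
    intro j hj
    rcases Nat.eq_zero_or_pos j with rfl | hj1
    · rw [hbc0 (t + 1)]
      exact hint 1 le_rfl (by omega)
    · rcases eq_or_lt_of_le hj with hje | hjlt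
      · rw [hje, hbcN (t + 1)]
        exact hint (N - 1) (by omega) le_rfl
      · exact hint j hj1 (by omega)
end

section
/- Fix an integer N ≥ 2 and let u be a lattice solution with non-flux boundary conditions satisfying 0 ≤ u(0,j) ≤ 1 for all sites 0 ≤ j ≤ N. Then the forward (diffusion) region Q⁺(t) = { j ∈ {0,…,N} : u(t,j) ≥ 1/2 } is nondecreasing in time: for all times t ≤ t₁ in ℕ, Q⁺(t) ⊆ Q⁺(t₁). Equivalently, if u(t,j) ≥ 1/2 then u(s,j) ≥ 1/2 for all s ≥ t. -/
lemma flow_lb' (u v : ℝ) (hu0 : 0 ≤ u) (hu1 : u ≤ 1) (hv0 : 0 ≤ v) (hv1 : v ≤ 1) :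
    -(u/8) ≤ (u*v/2)*(u+v-1)*(v-u) := by
  nlinarith [mul_nonneg (mul_nonneg hu0 hv0) (sq_nonneg (v - 1/2)),
    mul_nonneg (mul_nonneg hu0 (sub_nonneg.2 hv1)) (sq_nonneg (u - 1/2)),
    mul_nonneg (mul_nonneg hu0 hu0) (sub_nonneg.2 hu1)]

lemma flow_ub' (u v : ℝ) (hu0 : 0 ≤ u) (hu1 : u ≤ 1) (hv0 : 0 ≤ v) (hv1 : v ≤ 1) :
    (u*v/2)*(u+v-1)*(v-u) ≤ (1-u)/2 := by
  rcases le_total (u+v) 1 with hs | hs <;> rcases le_total u v with hd | hd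
  · nlinarith [mul_nonneg (mul_nonneg (mul_nonneg hu0 hv0) (sub_nonneg.2 hd))
      (sub_nonneg.2 hs)]
  · have h1 : u * (1 - u - v) ≤ 1 - u := by nlinarith [mul_nonneg hu0 hv0]
    have h2 : v * (u - v) ≤ 1 := by nlinarith
    have h2n : 0 ≤ v * (u - v) := mul_nonneg hv0 (sub_nonneg.2 hd)
    have key := mul_le_mul h1 h2 h2n (by linarith : (0:ℝ) ≤ 1 - u)
    nlinarith [key]
  · have h1 : u * v * (u + v - 1) ≤ 1 := by
      nlinarith [mul_nonneg hu0 hv0, mul_le_one₀ hu1 hv0 hv1]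
    have h2 : v - u ≤ 1 - u := by linarith
    have h2n : 0 ≤ v - u := sub_nonneg.2 hd
    have key := mul_le_mul h1 h2 h2n (by norm_num : (0:ℝ) ≤ 1)
    nlinarith [key]
  · nlinarith [mul_nonneg (mul_nonneg (mul_nonneg hu0 hv0) (sub_nonneg.2 hs))
      (sub_nonneg.2 hd)]

lemma flow_half' (u v : ℝ) (hu : 1/2 ≤ u) (hu1 : u ≤ 1) (hv0 : 0 ≤ v) (hv1 : v ≤ 1) :
    -((u - 1/2)/2) ≤ (u*v/2)*(u+v-1)*(v-u) := by
  nlinarith [sq_nonneg (v - 1/2),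
    mul_nonneg (mul_nonneg (le_trans (by norm_num) hu) hv0) (sq_nonneg (v - 1/2)),
    mul_le_one₀ hu1 hv0 hv1, sq_nonneg (u - 1/2),
    mul_nonneg (mul_nonneg (le_trans (by norm_num) hu) hv0) (sq_nonneg (u - 1/2))]

lemma step_all' (u a b : ℝ) (hu0 : 0 ≤ u) (hu1 : u ≤ 1) (ha0 : 0 ≤ a) (ha1 : a ≤ 1)
    (hb0 : 0 ≤ b) (hb1 : b ≤ 1) :
    (0 ≤ u + (u*a/2)*(u+a-1)*(a-u) + (u*b/2)*(u+b-1)*(b-u) ∧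
      u + (u*a/2)*(u+a-1)*(a-u) + (u*b/2)*(u+b-1)*(b-u) ≤ 1) ∧
    (1/2 ≤ u → 1/2 ≤ u + (u*a/2)*(u+a-1)*(a-u) + (u*b/2)*(u+b-1)*(b-u)) := by
  have la := flow_lb' u a hu0 hu1 ha0 ha1
  have lb := flow_lb' u b hu0 hu1 hb0 hb1
  have ua := flow_ub' u a hu0 hu1 ha0 ha1
  have ub := flow_ub' u b hu0 hu1 hb0 hb1
  refine ⟨⟨by linarith, by linarith⟩, fun hu => ?_⟩
  have ha := flow_half' u a hu hu1 ha0 ha1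
  have hb := flow_half' u b hu hu1 hb0 hb1
  linarith

/-- for the lattice cell-movement model with non-flux boundary
conditions and initial data in [0,1], the forward (diffusion) region
Q⁺(t) = { j : u(t,j) ≥ 1/2 } is nondecreasing in time. -/
theorem lattice_forward_region_nondecreasing (N : ℕ) (hN : 2 ≤ N) (u : ℕ → ℕ → ℝ)
    (heq : ∀ t : ℕ, ∀ j : ℕ, 1 ≤ j → j ≤ N - 1 →
      u (t + 1) j = u t j
        + (u t j * u t (j - 1) / 2) * (u t j + u t (j - 1) - 1) * (u t (j - 1) - u t j)
        + (u t j * u t (j + 1) / 2) * (u t j + u t (j + 1) - 1) * (u t (j + 1) - u t j))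
    (hbc0 : ∀ t : ℕ, u t 0 = u t 1)
    (hbcN : ∀ t : ℕ, u t N = u t (N - 1))
    (hinit : ∀ j ≤ N, 0 ≤ u 0 j ∧ u 0 j ≤ 1) :
    ∀ t t₁ : ℕ, t ≤ t₁ →
      { j : ℕ | j ≤ N ∧ 1 / 2 ≤ u t j } ⊆ { j : ℕ | j ≤ N ∧ 1 / 2 ≤ u t₁ j } := by
  have key : ∀ t : ℕ, (∀ j ≤ N, 0 ≤ u t j ∧ u t j ≤ 1) →
      ∀ j ≤ N, (0 ≤ u (t+1) j ∧ u (t+1) j ≤ 1) ∧ (1/2 ≤ u t j → 1/2 ≤ u (t+1) j) := by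
    intro t hbd
    have hintr : ∀ j : ℕ, 1 ≤ j → j ≤ N - 1 →
        (0 ≤ u (t+1) j ∧ u (t+1) j ≤ 1) ∧ (1/2 ≤ u t j → 1/2 ≤ u (t+1) j) := by
      intro j h1 h2
      have hj : j ≤ N := by omega
      have hjm : j - 1 ≤ N := by omega
      have hjp : j + 1 ≤ N := by omega
      obtain ⟨hu0, hu1⟩ := hbd j hj
      obtain ⟨ha0, ha1⟩ := hbd (j-1) hjm
      obtain ⟨hb0, hb1⟩ := hbd (j+1) hjp
      rw [heq t j h1 h2]
      exact step_all' (u t j) (u t (j-1)) (u t (j+1)) hu0 hu1 ha0 ha1 hb0 hb1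
    intro j hj
    rcases Nat.eq_zero_or_pos j with rfl | hj1
    · rw [hbc0 (t+1), hbc0 t]
      exact hintr 1 le_rfl (by omega)
    · rcases eq_or_lt_of_le hj with rfl | hjN
      · rw [hbcN (t+1), hbcN t]
        exact hintr (j-1) (by omega) (by omega)
      · exact hintr j hj1 (by omega)
  have hbounds : ∀ t : ℕ, ∀ j ≤ N, 0 ≤ u t j ∧ u t j ≤ 1 := by
    intro t
    induction t with
    | zero => exact hinit
    | succ t ih => exact fun j hj => ((key t ih j hj).1)
  have hstep : ∀ t : ℕ, ∀ j ≤ N, 1/2 ≤ u t j → 1/2 ≤ u (t+1) j :=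
    fun t j hj => (key t (hbounds t) j hj).2
  intro t t₁ hle
  induction t₁, hle using Nat.le_induction with
  | base => exact fun j hj => hj
  | succ t₁ hle ih =>
    intro j hj
    obtain ⟨hjN, hju⟩ := ih hj
    exact ⟨hjN, hstep t₁ j hjN hju⟩
end

section
/- Let (u1,u2,u3) be a solution of the five-site Dirichlet lattice model with 0 ≤ u_i(0) ≤ 1 for i = 1,2,3. If u1(0)+u2(0) > 1, u2(0)+u3(0) < 1 and 0 ≤ u1(0) < u2(0), then the limits L_i = lim_{t→∞} u_i(t) exist for i = 1,2,3 and satisfy L1 = L2 > 1/2 and L3 = 0. -/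
set_option maxHeartbeats 1600000 in
private lemma five_site_step (a b c : ℝ) (ha : 0 ≤ a) (hab : a < b) (hb : b ≤ 1)
    (hs : 1 < a + b) (hc : 0 ≤ c) (hbc : b + c < 1) :
    (0 ≤ a + (a * b / 2) * (a + b - 1) * (b - a)) ∧
    (a + (a * b / 2) * (a + b - 1) * (b - a)
      < b + (a * b / 2) * (a + b - 1) * (a - b) + (b * c / 2) * (b + c - 1) * (c - b)) ∧
    (b + (a * b / 2) * (a + b - 1) * (a - b) + (b * c / 2) * (b + c - 1) * (c - b) ≤ 1) ∧
    (a + b ≤ (a + (a * b / 2) * (a + b - 1) * (b - a))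
      + (b + (a * b / 2) * (a + b - 1) * (a - b) + (b * c / 2) * (b + c - 1) * (c - b))) ∧
    (0 ≤ c + (b * c / 2) * (b + c - 1) * (b - c)) ∧
    ((b + (a * b / 2) * (a + b - 1) * (a - b) + (b * c / 2) * (b + c - 1) * (c - b))
      + (c + (b * c / 2) * (b + c - 1) * (b - c)) ≤ b + c) ∧
    (a ≤ a + (a * b / 2) * (a + b - 1) * (b - a)) ∧
    (c + (b * c / 2) * (b + c - 1) * (b - c) ≤ c) := by
  have hca : c < a := by linarith
  have hcb : c < b := by linarith
  have hb0 : 0 < b := by linarith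
  have ha1 : a < 1 := by linarith
  have e1 : 0 ≤ (a * b / 2) * (a + b - 1) * (b - a) := by
    have := mul_nonneg (mul_nonneg (by positivity : (0:ℝ) ≤ a * b / 2)
      (by linarith : (0:ℝ) ≤ a + b - 1)) (by linarith : (0:ℝ) ≤ b - a)
    linarith
  have e2 : 0 ≤ (b * c / 2) * (b + c - 1) * (c - b) := by
    have h := mul_nonneg (mul_nonneg (by positivity : (0:ℝ) ≤ b * c / 2)
      (by linarith : (0:ℝ) ≤ 1 - b - c)) (by linarith : (0:ℝ) ≤ b - c)
    nlinarith [h]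
  have hab1 : a * b < 1 := by nlinarith
  have h2C1 : a * b * (a + b - 1) < 1 := by
    nlinarith [mul_nonneg (mul_nonneg ha hb0.le) (by linarith : (0:ℝ) ≤ 2 - (a + b))]
  refine ⟨by linarith, ?_, ?_, ?_, ?_, ?_, by linarith, ?_⟩
  · nlinarith [mul_pos (by linarith : (0:ℝ) < b - a)
      (by linarith : (0:ℝ) < 1 - a * b * (a + b - 1))]
  · have hbc1 : b * c ≤ 1 := by nlinarith
    have t1 : b * c * (b - c) ≤ 1 := by
      nlinarith [mul_nonneg (mul_nonneg hb0.le hc) (by linarith : (0:ℝ) ≤ 1 - (b - c))]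
    have t0 : 0 ≤ b * c * (b - c) :=
      mul_nonneg (mul_nonneg hb0.le hc) (by linarith)
    have hstep : (b * c / 2) * (b + c - 1) * (c - b) ≤ (1 - b) / 2 := by
      nlinarith [mul_nonneg (mul_nonneg hb0.le hc) (by linarith : (0:ℝ) ≤ b - c),
        mul_le_of_le_one_left (by linarith : (0:ℝ) ≤ 1 - b) t1]
    nlinarith [e1]
  · nlinarith [e2]
  · have hx0 : (0:ℝ) ≤ (1 - b - c) * (b - c) :=
      mul_nonneg (by linarith) (by linarith)
    have hx1 : (1 - b - c) * (b - c) ≤ 1 := by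
      nlinarith [mul_nonneg (by linarith : (0:ℝ) ≤ 1 - b - c)
        (by linarith : (0:ℝ) ≤ 1 - (b - c))]
    have hm : (b/2) * ((1 - b - c) * (b - c)) ≤ 1/2 :=
      le_trans (mul_le_of_le_one_right (by positivity) hx1) (by linarith)
    have hid : c + (b * c / 2) * (b + c - 1) * (b - c)
        = c * (1 - (b/2) * ((1 - b - c) * (b - c))) := by ring
    rw [hid]
    exact mul_nonneg hc (by linarith)
  · nlinarith [e1]
  · nlinarith [mul_nonneg (mul_nonneg (mul_nonneg hb0.le hc)
      (by linarith : (0:ℝ) ≤ 1 - b - c)) (by linarith : (0:ℝ) ≤ b - c)]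

/-- five-site Dirichlet lattice model, Case 1:
u1(0)+u2(0) > 1, u2(0)+u3(0) < 1 and 0 ≤ u1(0) < u2(0) imply the limits exist,
L1 = L2 > 1/2 and L3 = 0. -/
theorem five_site_case1 (u1 u2 u3 : ℕ → ℝ)
    (h1 : ∀ t : ℕ, u1 (t + 1) = u1 t
      + (u1 t * u2 t / 2) * (u1 t + u2 t - 1) * (u2 t - u1 t))
    (h2 : ∀ t : ℕ, u2 (t + 1) = u2 t
      + (u1 t * u2 t / 2) * (u1 t + u2 t - 1) * (u1 t - u2 t)
      + (u2 t * u3 t / 2) * (u2 t + u3 t - 1) * (u3 t - u2 t))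
    (h3 : ∀ t : ℕ, u3 (t + 1) = u3 t
      + (u2 t * u3 t / 2) * (u2 t + u3 t - 1) * (u2 t - u3 t))
    (hb1 : 0 ≤ u1 0 ∧ u1 0 ≤ 1) (hb2 : 0 ≤ u2 0 ∧ u2 0 ≤ 1) (hb3 : 0 ≤ u3 0 ∧ u3 0 ≤ 1)
    (hc1 : u1 0 + u2 0 > 1) (hc2 : u2 0 + u3 0 < 1) (hc3 : u1 0 < u2 0) :
    ∃ L1 L2 L3 : ℝ,
      Filter.Tendsto u1 Filter.atTop (nhds L1) ∧
      Filter.Tendsto u2 Filter.atTop (nhds L2) ∧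
      Filter.Tendsto u3 Filter.atTop (nhds L3) ∧
      L1 = L2 ∧ L2 > 1 / 2 ∧ L3 = 0 := by
  -- the invariant set
  have inv : ∀ t, 0 ≤ u1 t ∧ u1 t < u2 t ∧ u2 t ≤ 1 ∧ 1 < u1 t + u2 t ∧
      0 ≤ u3 t ∧ u2 t + u3 t < 1 := by
    intro t
    induction t with
    | zero => exact ⟨hb1.1, hc3, hb2.2, hc1, hb3.1, hc2⟩
    | succ t ih =>
      obtain ⟨ha, hab, hb, hs, hc, hbc⟩ := ih
      obtain ⟨p1, p2, p3, p4, p5, p6, _, _⟩ :=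
        five_site_step (u1 t) (u2 t) (u3 t) ha hab hb hs hc hbc
      rw [h1 t, h2 t, h3 t]
      exact ⟨p1, p2, p3, by linarith, p5, by linarith⟩
  -- monotonicity
  have step' : ∀ t, u1 t ≤ u1 (t+1) ∧ u3 (t+1) ≤ u3 t ∧
      u2 (t+1) + u3 (t+1) ≤ u2 t + u3 t ∧ u1 t + u2 t ≤ u1 (t+1) + u2 (t+1) := by
    intro t
    obtain ⟨ha, hab, hb, hs, hc, hbc⟩ := inv t
    obtain ⟨_, _, _, p4, _, p6, p7, p8⟩ :=
      five_site_step (u1 t) (u2 t) (u3 t) ha hab hb hs hc hbc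
    rw [h1 t, h2 t, h3 t]
    exact ⟨p7, p8, p6, p4⟩
  have mono1 : Monotone u1 := monotone_nat_of_le_succ fun t => (step' t).1
  have anti3 : Antitone u3 := antitone_nat_of_succ_le fun t => (step' t).2.1
  have anti23 : Antitone (fun t => u2 t + u3 t) :=
    antitone_nat_of_succ_le fun t => (step' t).2.2.1
  -- the limits
  have hu1 : Filter.Tendsto u1 Filter.atTop (nhds (⨆ t, u1 t)) :=
    tendsto_atTop_ciSup mono1 ⟨1, by rintro x ⟨t, rfl⟩; exact le_trans (inv t).2.1.le (inv t).2.2.1⟩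
  have hu3 : Filter.Tendsto u3 Filter.atTop (nhds (⨅ t, u3 t)) :=
    tendsto_atTop_ciInf anti3 ⟨0, by rintro x ⟨t, rfl⟩; exact (inv t).2.2.2.2.1⟩
  have hu23 : Filter.Tendsto (fun t => u2 t + u3 t) Filter.atTop (nhds (⨅ t, (u2 t + u3 t))) := by
    refine tendsto_atTop_ciInf anti23 ⟨0, ?_⟩
    rintro x ⟨t, rfl⟩
    exact add_nonneg (le_trans (inv t).1 (inv t).2.1.le) (inv t).2.2.2.2.1
  set L1 := ⨆ t, u1 t with hL1def
  set L3 := ⨅ t, u3 t with hL3def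
  set M := ⨅ t, (u2 t + u3 t) with hMdef
  set L2 := M - L3 with hL2def
  have hu2 : Filter.Tendsto u2 Filter.atTop (nhds L2) := by
    have := hu23.sub hu3
    simpa using this
  -- basic facts about the limits
  have hL3nn : 0 ≤ L3 := ge_of_tendsto' hu3 fun t => (inv t).2.2.2.2.1
  have hL2le1 : L2 ≤ 1 := le_of_tendsto' hu2 fun t => (inv t).2.2.1
  have hL1le1 : L1 ≤ 1 := le_of_tendsto' hu1 fun t => le_trans (inv t).2.1.le (inv t).2.2.1
  have hL1le2 : L1 ≤ L2 := le_of_tendsto_of_tendsto' hu1 hu2 fun t => (inv t).2.1.le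
  have mono12 : Monotone (fun t => u1 t + u2 t) :=
    monotone_nat_of_le_succ fun t => (step' t).2.2.2
  have hL12 : 1 < L1 + L2 := by
    have h0 : u1 0 + u2 0 ≤ L1 + L2 :=
      ge_of_tendsto' (hu1.add hu2) fun t => mono12 (Nat.zero_le t)
    linarith
  have hL23 : L2 + L3 < 1 := by
    have : L2 + L3 ≤ u2 0 + u3 0 :=
      le_of_tendsto' (hu2.add hu3) fun t => anti23 (Nat.zero_le t)
    linarith
  have hL1pos : 0 < L1 := by linarith
  have hL2pos : 0 < L2 := by linarith
  have hL2half : 1/2 < L2 := by linarith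
  have hL2gtL3 : L3 < L2 := by linarith
  -- limit equation for u1
  have keyA : Filter.Tendsto (fun t => u1 (t+1) - u1 t) Filter.atTop (nhds 0) := by
    have := (hu1.comp (Filter.tendsto_add_atTop_nat 1)).sub hu1
    simpa using this
  have key1 : (L1 * L2 / 2) * (L1 + L2 - 1) * (L2 - L1) = 0 := by
    have hA : Filter.Tendsto
        (fun t => (u1 t * u2 t / 2) * (u1 t + u2 t - 1) * (u2 t - u1 t))
        Filter.atTop (nhds ((L1 * L2 / 2) * (L1 + L2 - 1) * (L2 - L1))) :=
      (((hu1.mul hu2).div_const 2).mul ((hu1.add hu2).sub_const 1)).mul (hu2.sub hu1)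
    have hB : Filter.Tendsto
        (fun t => (u1 t * u2 t / 2) * (u1 t + u2 t - 1) * (u2 t - u1 t))
        Filter.atTop (nhds 0) := by
      refine keyA.congr fun t => ?_
      rw [h1 t]; ring
    exact tendsto_nhds_unique hA hB
  have key3 : (L2 * L3 / 2) * (L2 + L3 - 1) * (L2 - L3) = 0 := by
    have hA : Filter.Tendsto
        (fun t => (u2 t * u3 t / 2) * (u2 t + u3 t - 1) * (u2 t - u3 t))
        Filter.atTop (nhds ((L2 * L3 / 2) * (L2 + L3 - 1) * (L2 - L3))) :=
      (((hu2.mul hu3).div_const 2).mul ((hu2.add hu3).sub_const 1)).mul (hu2.sub hu3)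
    have hB : Filter.Tendsto
        (fun t => (u2 t * u3 t / 2) * (u2 t + u3 t - 1) * (u2 t - u3 t))
        Filter.atTop (nhds 0) := by
      have hC : Filter.Tendsto (fun t => u3 (t+1) - u3 t) Filter.atTop (nhds 0) := by
        have := (hu3.comp (Filter.tendsto_add_atTop_nat 1)).sub hu3
        simpa using this
      refine hC.congr fun t => ?_
      rw [h3 t]; ring
    exact tendsto_nhds_unique hA hB
  -- conclude L1 = L2
  have hEq : L1 = L2 := by
    have hpos : 0 < (L1 * L2 / 2) * (L1 + L2 - 1) :=
      mul_pos (by positivity) (by linarith)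
    rcases mul_eq_zero.1 key1 with h | h
    · exact absurd h hpos.ne'
    · linarith
  -- conclude L3 = 0
  have hZ : L3 = 0 := by
    rcases mul_eq_zero.1 key3 with h | h
    · rcases mul_eq_zero.1 h with h' | h'
      · have : L2 * L3 = 0 := by
          field_simp at h'
          linarith
        rcases mul_eq_zero.1 this with h'' | h''
        · exact absurd h'' hL2pos.ne'
        · exact h''
      · linarith
    · linarith
  exact ⟨L1, L2, L3, hu1, hu2, hu3, hEq, by linarith, hZ⟩
end

section
/- Let (u1,u2,u3) be a solution of the five-site Dirichlet lattice model with 0 ≤ u_i(0) ≤ 1 for i = 1,2,3. If u1(0) = u3(0), u1(0)+u2(0) > 1 and u2(0) ≤ min{u1(0), u3(0)}, then all three sequences converge to the common limit (u1(0)+u2(0)+u3(0))/3, i.e. lim_{t→∞} u_i(t) = (u1(0)+u2(0)+u3(0))/3 for i = 1,2,3. -/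
set_option maxHeartbeats 1000000 in
/-- five-site Dirichlet lattice model, Case 6 (first part):
u1(0) = u3(0), u1(0)+u2(0) > 1 and u2(0) the minimum imply that all three
sequences converge to the common limit (u1(0)+u2(0)+u3(0))/3. -/
theorem five_site_case6 (u1 u2 u3 : ℕ → ℝ)
    (h1 : ∀ t : ℕ, u1 (t + 1) = u1 t
      + (u1 t * u2 t / 2) * (u1 t + u2 t - 1) * (u2 t - u1 t))
    (h2 : ∀ t : ℕ, u2 (t + 1) = u2 t
      + (u1 t * u2 t / 2) * (u1 t + u2 t - 1) * (u1 t - u2 t)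
      + (u2 t * u3 t / 2) * (u2 t + u3 t - 1) * (u3 t - u2 t))
    (h3 : ∀ t : ℕ, u3 (t + 1) = u3 t
      + (u2 t * u3 t / 2) * (u2 t + u3 t - 1) * (u2 t - u3 t))
    (hb1 : 0 ≤ u1 0 ∧ u1 0 ≤ 1) (hb2 : 0 ≤ u2 0 ∧ u2 0 ≤ 1) (hb3 : 0 ≤ u3 0 ∧ u3 0 ≤ 1)
    (hsym : u1 0 = u3 0) (hc1 : u1 0 + u2 0 > 1)
    (hmin : u2 0 ≤ u1 0 ∧ u2 0 ≤ u3 0) :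
    Filter.Tendsto u1 Filter.atTop (nhds ((u1 0 + u2 0 + u3 0) / 3)) ∧
    Filter.Tendsto u2 Filter.atTop (nhds ((u1 0 + u2 0 + u3 0) / 3)) ∧
    Filter.Tendsto u3 Filter.atTop (nhds ((u1 0 + u2 0 + u3 0) / 3)) := by
  obtain ⟨hb10, hb11⟩ := hb1
  obtain ⟨hb20, hb21⟩ := hb2
  obtain ⟨hmin1, hmin2⟩ := hmin
  have hb0pos : 0 < u2 0 := by linarith
  have hσ : (0:ℝ) < u1 0 + u2 0 - 1 := by linarith
  set L : ℝ := max (1/2) (1 - (3/2) * (u2 0 ^ 2 * (u1 0 + u2 0 - 1))) with hLdef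
  have hLhalf : (1:ℝ)/2 ≤ L := le_max_left _ _
  have hL0 : (0:ℝ) ≤ L := by linarith
  have hL1 : L < 1 := by
    apply max_lt (by norm_num)
    nlinarith [sq_nonneg (u2 0), mul_pos (mul_pos hb0pos hb0pos) hσ]
  have key : ∀ t, u3 t = u1 t ∧ u2 0 ≤ u1 t ∧ u1 t ≤ u1 0 ∧ u2 0 ≤ u2 t ∧ u2 t ≤ u1 0
      ∧ 2 * u1 t + u2 t = 2 * u1 0 + u2 0
      ∧ |u1 t - u2 t| ≤ |u1 0 - u2 0| * L ^ t := by
    intro t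
    induction t with
    | zero =>
      refine ⟨hsym.symm, hmin1, le_refl _, le_refl _, hmin1, by ring, by simp⟩
    | succ t ih =>
      obtain ⟨hsymt, ha1, ha2, hbl, hbu, hcons, hdb⟩ := ih
      obtain ⟨c, hcdef⟩ : ∃ c : ℝ, c = u1 t * u2 t * (u1 t + u2 t - 1) := ⟨_, rfl⟩
      have hab : u1 0 + u2 0 ≤ u1 t + u2 t := by linarith
      have habm1 : 0 < u1 t + u2 t - 1 := by linarith
      have ha0' : 0 < u1 t := lt_of_lt_of_le hb0pos ha1
      have hb0' : 0 < u2 t := lt_of_lt_of_le hb0pos hbl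
      have hc0 : 0 ≤ c := by rw [hcdef]; positivity
      have hab1 : u1 t * u2 t ≤ 1 := mul_le_one₀ (by linarith) hb0'.le (by linarith)
      have hc1' : c ≤ 1 := by
        rw [hcdef]
        exact mul_le_one₀ hab1 habm1.le (by linarith)
      have hce : u2 0 ^ 2 * (u1 0 + u2 0 - 1) ≤ c := by
        rw [hcdef, pow_two]
        exact mul_le_mul (mul_le_mul ha1 hbl hb0pos.le ha0'.le)
          (by linarith) hσ.le (by positivity)
      have e1 : u1 (t + 1) = u1 t - c / 2 * (u1 t - u2 t) := by
        rw [h1 t, hcdef]; ring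
      have e2 : u2 (t + 1) = u2 t + c * (u1 t - u2 t) := by
        rw [h2 t, hsymt, hcdef]; ring
      have e3 : u3 (t + 1) = u1 (t + 1) := by
        rw [h3 t, h1 t, hsymt]; ring
      refine ⟨e3, ?_, ?_, ?_, ?_, ?_, ?_⟩
      · rw [e1]
        linarith [mul_nonneg (by linarith : (0:ℝ) ≤ 2 - c) (by linarith : (0:ℝ) ≤ u1 t - u2 0),
          mul_nonneg hc0 (by linarith : (0:ℝ) ≤ u2 t - u2 0)]
      · rw [e1]
        linarith [mul_nonneg (by linarith : (0:ℝ) ≤ 2 - c) (by linarith : (0:ℝ) ≤ u1 0 - u1 t),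
          mul_nonneg hc0 (by linarith : (0:ℝ) ≤ u1 0 - u2 t)]
      · rw [e2]
        linarith [mul_nonneg (by linarith : (0:ℝ) ≤ 1 - c) (by linarith : (0:ℝ) ≤ u2 t - u2 0),
          mul_nonneg hc0 (by linarith : (0:ℝ) ≤ u1 t - u2 0)]
      · rw [e2]
        linarith [mul_nonneg (by linarith : (0:ℝ) ≤ 1 - c) (by linarith : (0:ℝ) ≤ u1 0 - u2 t),
          mul_nonneg hc0 (by linarith : (0:ℝ) ≤ u1 0 - u1 t)]
      · have : 2 * u1 (t + 1) + u2 (t + 1) = 2 * u1 t + u2 t := by rw [e1, e2]; ring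
        linarith
      · have ed : u1 (t + 1) - u2 (t + 1) = (1 - 3 / 2 * c) * (u1 t - u2 t) := by
          rw [e1, e2]; ring
        have habs : |1 - 3 / 2 * c| ≤ L := by
          rw [abs_le]
          constructor
          · linarith
          · have h := le_max_right (1/2 : ℝ) (1 - 3/2 * (u2 0 ^ 2 * (u1 0 + u2 0 - 1)))
            rw [← hLdef] at h
            linarith
        calc |u1 (t + 1) - u2 (t + 1)|
            = |1 - 3 / 2 * c| * |u1 t - u2 t| := by rw [ed, abs_mul]
          _ ≤ L * (|u1 0 - u2 0| * L ^ t) :=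
              mul_le_mul habs hdb (abs_nonneg _) hL0
          _ = |u1 0 - u2 0| * L ^ (t + 1) := by ring
  have hd : Filter.Tendsto (fun t => u1 t - u2 t) Filter.atTop (nhds 0) := by
    apply squeeze_zero_norm (fun t => ?_)
      (by simpa using (tendsto_pow_atTop_nhds_zero_of_lt_one hL0 hL1).const_mul |u1 0 - u2 0|)
    simpa [Real.norm_eq_abs] using (key t).2.2.2.2.2.2
  have hS : u1 0 + u2 0 + u3 0 = 2 * u1 0 + u2 0 := by rw [← hsym]; ring
  have t1 : Filter.Tendsto u1 Filter.atTop (nhds ((u1 0 + u2 0 + u3 0) / 3)) := by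
    have h : Filter.Tendsto (fun t => ((2 * u1 0 + u2 0) + (u1 t - u2 t)) / 3)
        Filter.atTop (nhds (((2 * u1 0 + u2 0) + 0) / 3)) :=
      (tendsto_const_nhds.add hd).div_const 3
    have he : ((2 * u1 0 + u2 0) + (0:ℝ)) / 3 = (u1 0 + u2 0 + u3 0) / 3 := by
      rw [hS]; ring
    rw [he] at h
    exact h.congr fun t => by have := (key t).2.2.2.2.2.1; linarith
  have t2 : Filter.Tendsto u2 Filter.atTop (nhds ((u1 0 + u2 0 + u3 0) / 3)) := by
    have h : Filter.Tendsto (fun t => ((2 * u1 0 + u2 0) - 2 * (u1 t - u2 t)) / 3)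
        Filter.atTop (nhds (((2 * u1 0 + u2 0) - 2 * 0) / 3)) :=
      (tendsto_const_nhds.sub (hd.const_mul 2)).div_const 3
    have he : ((2 * u1 0 + u2 0) - 2 * (0:ℝ)) / 3 = (u1 0 + u2 0 + u3 0) / 3 := by
      rw [hS]; ring
    rw [he] at h
    exact h.congr fun t => by have := (key t).2.2.2.2.2.1; ring_nf; linarith
  exact ⟨t1, t2, t1.congr fun t => ((key t).1).symm⟩
end

section
/- Let (u1,u2,u3) be a solution of the five-site Dirichlet lattice model. Suppose either (i) 1/2 ≤ u1(0) ≤ u2(0) ≤ 1 and 1/2 ≤ u3(0) ≤ u2(0) ≤ 1, or (ii) 1/2 ≤ u2(0) ≤ u1(0) ≤ 1 and 1/2 ≤ u2(0) ≤ u3(0) ≤ 1. Then the limits lim_{t→∞} u_i(t) exist for i = 1,2,3 and are all equal: lim_{t→∞} u1(t) = lim_{t→∞} u2(t) = lim_{t→∞} u3(t). -/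
open Filter

lemma fs_c_nonneg (x y : ℝ) (hx0 : 1/2 ≤ x) (hy0 : 1/2 ≤ y) :
    0 ≤ x * y / 2 * (x + y - 1) := by
  have h1 : 0 ≤ x * y / 2 := by nlinarith
  have h2 : 0 ≤ x + y - 1 := by linarith
  exact mul_nonneg h1 h2

lemma fs_c_le (x y : ℝ) (hx0 : 1/2 ≤ x) (hx1 : x ≤ 1) (hy0 : 1/2 ≤ y) (hy1 : y ≤ 1) :
    x * y / 2 * (x + y - 1) ≤ 1/2 := by
  nlinarith [mul_nonneg (by linarith : (0:ℝ) ≤ x) (by linarith : (0:ℝ) ≤ y)]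

lemma fs_c_lb (x y : ℝ) (hx0 : 1/2 ≤ x) (hx1 : x ≤ 1) (hy0 : 1/2 ≤ y) (hy1 : y ≤ 1) :
    (y - x)^2 / 8 ≤ x * y / 2 * (x + y - 1) := by
  have h1 : (y - x)^2 ≤ x + y - 1 := by
    nlinarith [mul_nonneg (by linarith : (0:ℝ) ≤ 2*x - 1) (by linarith : (0:ℝ) ≤ 2*y - 1)]
  nlinarith [mul_nonneg (by nlinarith : (0:ℝ) ≤ x*y/2 - 1/8) (by linarith : (0:ℝ) ≤ x + y - 1)]

lemma fs_energy_step (x y z c d : ℝ)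
    (hc0 : 0 ≤ c) (hc1 : c ≤ 1/2) (hc2 : (y - x)^2 / 8 ≤ c)
    (hd0 : 0 ≤ d) (hd1 : d ≤ 1/2) (hd2 : (y - z)^2 / 8 ≤ d) :
    (x + c*(y-x))^2 + (y + c*(x-y) + d*(z-y))^2 + (z + d*(y-z))^2
      + ((y-x)^4 + (y-z)^4)/16 ≤ x^2 + y^2 + z^2 := by
  have hA : 0 ≤ (c*(y-x) - d*(y-z))^2 := sq_nonneg _
  have hB : 0 ≤ c*(1/2-c)*(y-x)^2 :=
    mul_nonneg (mul_nonneg hc0 (by linarith)) (sq_nonneg _)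
  have hC : 0 ≤ d*(1/2-d)*(y-z)^2 :=
    mul_nonneg (mul_nonneg hd0 (by linarith)) (sq_nonneg _)
  have hD : 0 ≤ (c-(y-x)^2/8)*(y-x)^2 :=
    mul_nonneg (by linarith) (sq_nonneg _)
  have hE : 0 ≤ (d-(y-z)^2/8)*(y-z)^2 :=
    mul_nonneg (by linarith) (sq_nonneg _)
  nlinarith [hA, hB, hC, hD, hE]

/-- box invariance, one step -/
lemma fs_box_step (x y z : ℝ)
    (hx0 : 1/2 ≤ x) (hx1 : x ≤ 1) (hy0 : 1/2 ≤ y) (hy1 : y ≤ 1)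
    (hz0 : 1/2 ≤ z) (hz1 : z ≤ 1) :
    (1/2 ≤ x + x*y/2*(x+y-1)*(y-x) ∧ x + x*y/2*(x+y-1)*(y-x) ≤ 1) ∧
    (1/2 ≤ y + x*y/2*(x+y-1)*(x-y) + y*z/2*(y+z-1)*(z-y) ∧
      y + x*y/2*(x+y-1)*(x-y) + y*z/2*(y+z-1)*(z-y) ≤ 1) ∧
    (1/2 ≤ z + y*z/2*(y+z-1)*(y-z) ∧ z + y*z/2*(y+z-1)*(y-z) ≤ 1) := by
  have hc0 := fs_c_nonneg x y hx0 hy0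
  have hc1 := fs_c_le x y hx0 hx1 hy0 hy1
  have hd0 := fs_c_nonneg y z hy0 hz0
  have hd1 := fs_c_le y z hy0 hy1 hz0 hz1
  set c := x*y/2*(x+y-1) with hc
  set d := y*z/2*(y+z-1) with hd
  refine ⟨⟨?_, ?_⟩, ⟨?_, ?_⟩, ?_, ?_⟩
  · nlinarith [mul_nonneg (by linarith : (0:ℝ) ≤ 1 - c) (by linarith : (0:ℝ) ≤ x - 1/2),
      mul_nonneg hc0 (by linarith : (0:ℝ) ≤ y - 1/2)]
  · nlinarith [mul_nonneg (by linarith : (0:ℝ) ≤ 1 - c) (by linarith : (0:ℝ) ≤ 1 - x),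
      mul_nonneg hc0 (by linarith : (0:ℝ) ≤ 1 - y)]
  · nlinarith [mul_nonneg (by linarith : (0:ℝ) ≤ 1 - c - d) (by linarith : (0:ℝ) ≤ y - 1/2),
      mul_nonneg hc0 (by linarith : (0:ℝ) ≤ x - 1/2),
      mul_nonneg hd0 (by linarith : (0:ℝ) ≤ z - 1/2)]
  · nlinarith [mul_nonneg (by linarith : (0:ℝ) ≤ 1 - c - d) (by linarith : (0:ℝ) ≤ 1 - y),
      mul_nonneg hc0 (by linarith : (0:ℝ) ≤ 1 - x),
      mul_nonneg hd0 (by linarith : (0:ℝ) ≤ 1 - z)]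
  · nlinarith [mul_nonneg (by linarith : (0:ℝ) ≤ 1 - d) (by linarith : (0:ℝ) ≤ z - 1/2),
      mul_nonneg hd0 (by linarith : (0:ℝ) ≤ y - 1/2)]
  · nlinarith [mul_nonneg (by linarith : (0:ℝ) ≤ 1 - d) (by linarith : (0:ℝ) ≤ 1 - z),
      mul_nonneg hd0 (by linarith : (0:ℝ) ≤ 1 - y)]

def fsE (u1 u2 u3 : ℕ → ℝ) : ℕ → ℝ := fun t => (u1 t)^2 + (u2 t)^2 + (u3 t)^2


/-- five-site Dirichlet lattice model, Case 10:
if either 1/2 ≤ u1(0), u3(0) ≤ u2(0) ≤ 1 or 1/2 ≤ u2(0) ≤ u1(0), u3(0) ≤ 1,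
then the three sequences converge to a common limit. -/
theorem five_site_case10 (u1 u2 u3 : ℕ → ℝ)
    (h1 : ∀ t : ℕ, u1 (t + 1) = u1 t
      + (u1 t * u2 t / 2) * (u1 t + u2 t - 1) * (u2 t - u1 t))
    (h2 : ∀ t : ℕ, u2 (t + 1) = u2 t
      + (u1 t * u2 t / 2) * (u1 t + u2 t - 1) * (u1 t - u2 t)
      + (u2 t * u3 t / 2) * (u2 t + u3 t - 1) * (u3 t - u2 t))
    (h3 : ∀ t : ℕ, u3 (t + 1) = u3 t
      + (u2 t * u3 t / 2) * (u2 t + u3 t - 1) * (u2 t - u3 t))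
    (hcase :
      (1 / 2 ≤ u1 0 ∧ u1 0 ≤ u2 0 ∧ u2 0 ≤ 1 ∧ 1 / 2 ≤ u3 0 ∧ u3 0 ≤ u2 0) ∨
      (1 / 2 ≤ u2 0 ∧ u2 0 ≤ u1 0 ∧ u1 0 ≤ 1 ∧ u2 0 ≤ u3 0 ∧ u3 0 ≤ 1)) :
    ∃ L : ℝ,
      Filter.Tendsto u1 Filter.atTop (nhds L) ∧
      Filter.Tendsto u2 Filter.atTop (nhds L) ∧
      Filter.Tendsto u3 Filter.atTop (nhds L) := by
  -- initial box
  have hbox0 : (1/2 ≤ u1 0 ∧ u1 0 ≤ 1) ∧ (1/2 ≤ u2 0 ∧ u2 0 ≤ 1) ∧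
      (1/2 ≤ u3 0 ∧ u3 0 ≤ 1) := by
    rcases hcase with ⟨a,b,c,d,e⟩ | ⟨a,b,c,d,e⟩ <;>
      exact ⟨⟨by linarith, by linarith⟩, ⟨by linarith, by linarith⟩,
        ⟨by linarith, by linarith⟩⟩
  -- box invariance
  have hbox : ∀ t, (1/2 ≤ u1 t ∧ u1 t ≤ 1) ∧ (1/2 ≤ u2 t ∧ u2 t ≤ 1) ∧
      (1/2 ≤ u3 t ∧ u3 t ≤ 1) := by
    intro t
    induction t with
    | zero => exact hbox0
    | succ t ih =>
      obtain ⟨⟨a1,a2⟩,⟨b1,b2⟩,⟨c1,c2⟩⟩ := ih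
      have := fs_box_step (u1 t) (u2 t) (u3 t) a1 a2 b1 b2 c1 c2
      rw [h1 t, h2 t, h3 t]
      exact this
  -- mass conservation
  have hS : ∀ t, u1 t + u2 t + u3 t = u1 0 + u2 0 + u3 0 := by
    intro t
    induction t with
    | zero => rfl
    | succ t ih =>
      rw [h1 t, h2 t, h3 t]
      linarith [ih]
  -- energy
  have hEdef : ∀ t, fsE u1 u2 u3 t = (u1 t)^2 + (u2 t)^2 + (u3 t)^2 := fun t => rfl
  have hstep : ∀ t, fsE u1 u2 u3 (t+1) + ((u2 t - u1 t)^4 + (u2 t - u3 t)^4)/16 ≤ fsE u1 u2 u3 t := by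
    intro t
    obtain ⟨⟨a1,a2⟩,⟨b1,b2⟩,⟨c1,c2⟩⟩ := hbox t
    have key := fs_energy_step (u1 t) (u2 t) (u3 t)
      (u1 t * u2 t / 2 * (u1 t + u2 t - 1)) (u2 t * u3 t / 2 * (u2 t + u3 t - 1))
      (fs_c_nonneg _ _ a1 b1) (fs_c_le _ _ a1 a2 b1 b2) (fs_c_lb _ _ a1 a2 b1 b2)
      (fs_c_nonneg _ _ b1 c1) (fs_c_le _ _ b1 b2 c1 c2)
      (by rw [show (u2 t - u3 t)^2 = (u3 t - u2 t)^2 by ring]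
          exact fs_c_lb _ _ b1 b2 c1 c2)
    rw [hEdef, hEdef, h1 t, h2 t, h3 t]
    nlinarith [key]
  have hE0 : ∀ t, 0 ≤ fsE u1 u2 u3 t := fun t => by rw [hEdef]; positivity
  have hanti : Antitone (fsE u1 u2 u3) := antitone_nat_of_succ_le fun t => by
    have := hstep t
    have h4a : (0:ℝ) ≤ (u2 t - u1 t)^4 := by positivity
    have h4b : (0:ℝ) ≤ (u2 t - u3 t)^4 := by positivity
    linarith
  have hbdd : BddBelow (Set.range (fsE u1 u2 u3)) := ⟨0, fun x ⟨t, ht⟩ => ht ▸ hE0 t⟩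
  have hEt : Tendsto (fsE u1 u2 u3) atTop (nhds (⨅ t, fsE u1 u2 u3 t)) := tendsto_atTop_ciInf hanti hbdd
  have hEt1 : Tendsto (fun t => fsE u1 u2 u3 (t+1)) atTop (nhds (⨅ t, fsE u1 u2 u3 t)) :=
    hEt.comp (tendsto_add_atTop_nat 1)
  have hdrop : Tendsto (fun t => 16 * (fsE u1 u2 u3 t - fsE u1 u2 u3 (t+1))) atTop (nhds 0) := by
    have := (hEt.sub hEt1).const_mul (16:ℝ)
    simpa using this
  -- the two gaps to the fourth power tend to 0
  have ha4 : Tendsto (fun t => (u2 t - u1 t)^4) atTop (nhds 0) := by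
    apply tendsto_of_tendsto_of_tendsto_of_le_of_le tendsto_const_nhds hdrop
    · intro t; positivity
    · intro t
      have := hstep t
      have h4 : (0:ℝ) ≤ (u2 t - u3 t)^4 := by positivity
      show (u2 t - u1 t)^4 ≤ 16 * (fsE u1 u2 u3 t - fsE u1 u2 u3 (t+1))
      linarith
  have hb4 : Tendsto (fun t => (u2 t - u3 t)^4) atTop (nhds 0) := by
    apply tendsto_of_tendsto_of_tendsto_of_le_of_le tendsto_const_nhds hdrop
    · intro t; positivity
    · intro t
      have := hstep t
      have h4 : (0:ℝ) ≤ (u2 t - u1 t)^4 := by positivity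
      show (u2 t - u3 t)^4 ≤ 16 * (fsE u1 u2 u3 t - fsE u1 u2 u3 (t+1))
      linarith
  -- pow 4 → 0 implies → 0
  have sqrt4 : ∀ (f : ℕ → ℝ), Tendsto (fun t => (f t)^4) atTop (nhds 0) →
      Tendsto f atTop (nhds 0) := by
    intro f hf
    have h2 : Tendsto (fun t => (f t)^2) atTop (nhds 0) := by
      have := (Real.continuous_sqrt.tendsto 0).comp hf
      have key : ∀ t, Real.sqrt ((f t)^4) = (f t)^2 := fun t => by
        rw [show (f t)^4 = ((f t)^2)^2 by ring, Real.sqrt_sq (sq_nonneg _)]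
      simpa [Function.comp_def, key, Real.sqrt_zero] using this
    have habs : Tendsto (fun t => |f t|) atTop (nhds 0) := by
      have := (Real.continuous_sqrt.tendsto 0).comp h2
      simpa [Function.comp_def, Real.sqrt_sq_eq_abs, Real.sqrt_zero] using this
    have hneg : Tendsto (fun t => -|f t|) atTop (nhds 0) := by
      simpa using habs.neg
    exact tendsto_of_tendsto_of_tendsto_of_le_of_le hneg habs
      (fun t => neg_abs_le _) (fun t => le_abs_self _)
  have ha : Tendsto (fun t => u2 t - u1 t) atTop (nhds 0) := sqrt4 _ ha4
  have hb : Tendsto (fun t => u2 t - u3 t) atTop (nhds 0) := sqrt4 _ hb4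
  -- limits
  refine ⟨(u1 0 + u2 0 + u3 0)/3, ?_, ?_, ?_⟩
  all_goals {
    have hu2 : Tendsto u2 atTop (nhds ((u1 0 + u2 0 + u3 0)/3)) := by
      have h : Tendsto (fun t => (u1 0 + u2 0 + u3 0 + (u2 t - u1 t) + (u2 t - u3 t))/3)
          atTop (nhds ((u1 0 + u2 0 + u3 0 + 0 + 0)/3)) :=
        (((tendsto_const_nhds).add ha).add hb).div_const 3
      simp only [add_zero] at h
      refine h.congr fun t => ?_
      have := hS t
      field_simp
      linarith
    first
    | exact hu2
    | · have := hu2.sub ha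
        simpa using this
    | · have := hu2.sub hb
        simpa using this
  }
end
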